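/- Let G be a weighted graph with integer weights and θ an equilibrium of G. If k > 2 w(G), then the lifted equilibrium θ^σ on the k-spinning S_k(G) is linearly stable (the Hessian U''_{θ^σ} is positive semidefinite with kernel spanned by the all-ones vector) if and only if θ is linearly stable for G (the Hessian U''_θ is positive semidefinite with kernel spanned by the all-ones vector). -/

import Mathlib

open Real Finset

/-- Adjacency of the `k`-spinning of a weighted graph with oriented weight
function `w` (each edge carries its weight in exactly one direction). -/
def spinAdj {V : Type*} (k : ℕ) (w : V → V → ℕ) (x y : V × ZMod k) : Prop :=
  (y.2 - x.2).val < w x.1 y.1 ∨ (x.2 - y.2).val < w y.1 x.1 ∨ (x.1 = y.1 ∧ x.2 ≠ y.2)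

instance {V : Type*} [DecidableEq V] (k : ℕ) (w : V → V → ℕ) (x y : V × ZMod k) :
    Decidable (spinAdj k w x y) := by unfold spinAdj; infer_instance

/-- Hessian of the Kuramoto potential of the weighted graph `G` at `θ`. -/
noncomputable def hessW {V : Type*} [Fintype V] [DecidableEq V]
    (w : V → V → ℕ) (θ : V → ℝ) : Matrix V V ℝ :=
  fun u v => if u = v then ∑ x, ((w x v + w v x : ℕ) : ℝ) * Real.cos (θ x - θ v)
             else -(((w u v + w v u : ℕ) : ℝ) * Real.cos (θ u - θ v))

/-- Hessian of the Kuramoto potential of the (unweighted) `k`-spinning `S_k(G)`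
at the lifted point `θ^σ`. -/
noncomputable def hessS {V : Type*} [Fintype V] [DecidableEq V]
    (k : ℕ) [NeZero k] (w : V → V → ℕ) (θ : V → ℝ) :
    Matrix (V × ZMod k) (V × ZMod k) ℝ :=
  fun x y => if x = y then ∑ z, (if spinAdj k w x z then Real.cos (θ z.1 - θ x.1) else 0)
             else if spinAdj k w x y then -Real.cos (θ x.1 - θ y.1) else 0

/-!
Both Hessians are weighted graph Laplacians, so linear stability of either amounts to positivity
of the Dirichlet energy `∑ x, ∑ z, B x z * (y x - y z) ^ 2` on non-constant vectors.
Write a vector on the spinning as `y = z ∘ Prod.fst + r` with `r` summing to zero on every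
fibre `{u} × ZMod k`. Inside a fibre the spinning is a complete graph, which contributes
`2 k ∑ r²`. Between two fibres over `u ≠ v` every vertex has exactly `w u v + w v u` neighbours,
so the cross terms between `z` and `r` cancel, the `z`-part contributes `k` times the energy of
`z` on `G`, and since `|cos| ≤ 1` the `r`-part costs at most `4 w(G) ∑ r²`. Hence
`k E_G(z) + 2 (k - 2 w(G)) ∑ r² ≤ E_S(y)`, with `E_S(z ∘ Prod.fst) = k E_G(z)`, and both
implications follow once `k > 2 w(G)`.
-/

open Matrix

namespace ZMod

variable {k : ℕ} [NeZero k]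

lemma card_filter_val_lt {a : ℕ} (ha : a ≤ k) : #{d : ZMod k | d.val < a} = a := by
  rw [← card_range a]
  refine card_nbij' val (fun m => (m : ZMod k)) ?_ ?_ ?_ ?_
  · intro d hd; simpa using hd
  · intro m hm
    have hmk : m < k := (mem_range.1 hm).trans_le ha
    simpa [val_cast_of_lt hmk] using hm
  · intro d _; simp
  · intro m hm; exact val_cast_of_lt ((mem_range.1 hm).trans_le ha)

lemma card_filter_sub_val_lt_or {a b : ℕ} (ha : a ≤ k) (hb : b ≤ k) (hab : a = 0 ∨ b = 0)
    (i : ZMod k) : #{j : ZMod k | (j - i).val < a ∨ (i - j).val < b} = a + b := by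
  rcases hab with rfl | rfl
  · simp only [not_lt_zero, false_or, zero_add]
    refine (card_nbij' (i - ·) (i - ·) ?_ ?_ ?_ ?_).trans (card_filter_val_lt hb) <;>
      intro j _ <;> simp_all
  · simp only [not_lt_zero, or_false, add_zero]
    refine (card_nbij' (· - i) (· + i) ?_ ?_ ?_ ?_).trans (card_filter_val_lt ha) <;>
      intro j _ <;> simp_all

end ZMod

section WeightedLaplacian

variable {n : Type*} [Fintype n] (B : n → n → ℝ)

def dirichletEnergy (y : n → ℝ) : ℝ := ∑ x, ∑ z, B x z * (y x - y z) ^ 2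

lemma dirichletEnergy_const (t : ℝ) : dirichletEnergy B (fun _ => t) = 0 := by
  simp [dirichletEnergy]

variable [DecidableEq n]

def weightedLap : Matrix n n ℝ := diagonal (fun x => ∑ z, B x z) - of B

lemma weightedLap_mulVec (y : n → ℝ) (x : n) :
    (weightedLap B *ᵥ y) x = ∑ z, B x z * (y x - y z) := by
  simp only [weightedLap, sub_mulVec, Pi.sub_apply, mulVec_diagonal, mul_sub, sum_sub_distrib,
    sum_mul]
  rfl

lemma weightedLap_mulVec_const (t : ℝ) : weightedLap B *ᵥ (fun _ => t) = 0 := by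
  ext x; simp [weightedLap_mulVec]

variable {B}

lemma weightedLap_isHermitian (hB : ∀ x z, B x z = B z x) : (weightedLap B).IsHermitian := by
  ext x z
  by_cases h : x = z
  · subst h; simp [weightedLap]
  · simp [weightedLap, h, Ne.symm h, hB]

lemma two_mul_dotProduct_weightedLap_mulVec (hB : ∀ x z, B x z = B z x) (y : n → ℝ) :
    2 * (y ⬝ᵥ weightedLap B *ᵥ y) = dirichletEnergy B y := by
  have h : y ⬝ᵥ weightedLap B *ᵥ y = ∑ x, ∑ z, B x z * y x * (y x - y z) := by
    simp only [dotProduct, weightedLap_mulVec, mul_sum]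
    exact sum_congr rfl fun x _ => sum_congr rfl fun z _ => by ring
  have h' : y ⬝ᵥ weightedLap B *ᵥ y = ∑ x, ∑ z, B x z * y z * (y z - y x) := by
    rw [h, sum_comm]; simp only [hB]
  rw [two_mul]
  nth_rw 1 [h]
  rw [h', ← sum_add_distrib, dirichletEnergy]
  exact sum_congr rfl fun x _ => by rw [← sum_add_distrib]; exact sum_congr rfl fun z _ => by ring

lemma weightedLap_stable_iff (hB : ∀ x z, B x z = B z x) :
    ((weightedLap B).PosSemidef ∧
      ∀ y : n → ℝ, weightedLap B *ᵥ y = 0 ↔ ∃ t : ℝ, y = fun _ => t) ↔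
    ∀ y : n → ℝ, (¬∃ t : ℝ, y = fun _ => t) → 0 < dirichletEnergy B y := by
  have hquad (y : n → ℝ) : star y ⬝ᵥ weightedLap B *ᵥ y = dirichletEnergy B y / 2 := by
    rw [star_trivial, ← two_mul_dotProduct_weightedLap_mulVec hB]; ring
  constructor
  · rintro ⟨hpsd, hker⟩ y hy
    have hnonneg : 0 ≤ dirichletEnergy B y := by
      have := hpsd.dotProduct_mulVec_nonneg y; rw [hquad] at this; linarith
    refine hnonneg.lt_of_ne fun h0 => hy ((hker y).1 ?_)
    rw [← hpsd.dotProduct_mulVec_zero_iff, hquad, ← h0, zero_div]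
  · intro hpos
    have hnonneg (y : n → ℝ) : 0 ≤ dirichletEnergy B y := by
      by_cases hy : ∃ t : ℝ, y = fun _ => t
      · obtain ⟨t, rfl⟩ := hy; rw [dirichletEnergy_const]
      · exact (hpos y hy).le
    have hpsd : (weightedLap B).PosSemidef :=
      .of_dotProduct_mulVec_nonneg (weightedLap_isHermitian hB) fun y => by
        rw [hquad]; exact div_nonneg (hnonneg y) zero_le_two
    refine ⟨hpsd, fun y => ⟨fun h0 => ?_, ?_⟩⟩
    · by_contra hy
      have := hquad y
      rw [star_trivial, h0, dotProduct_zero] at this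
      linarith [hpos y hy]
    · rintro ⟨t, rfl⟩; exact weightedLap_mulVec_const B t

end WeightedLaplacian

section Biregular

variable {ι κ : Type*} [Fintype ι] [Fintype κ] {a : ι → κ → ℝ} {m : ℝ}

lemma sum_sum_mul_add_sq_of_biregular (hrow : ∀ i, ∑ j, a i j = m) (hcol : ∀ j, ∑ i, a i j = m)
    {f : ι → ℝ} {g : κ → ℝ} (hf : ∑ i, f i = 0) (hg : ∑ j, g j = 0) (c : ℝ) :
    ∑ i, ∑ j, a i j * (c + (f i - g j)) ^ 2
      = m * Fintype.card ι * c ^ 2 + ∑ i, ∑ j, a i j * (f i - g j) ^ 2 := by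
  have hexp (i : ι) (j : κ) : a i j * (c + (f i - g j)) ^ 2
      = c ^ 2 * a i j + 2 * c * (f i * a i j) - 2 * c * (g j * a i j)
        + a i j * (f i - g j) ^ 2 := by ring
  have hg' : ∑ i, ∑ j, g j * a i j = 0 := by
    rw [sum_comm]; simp only [← mul_sum, hcol, ← sum_mul, hg, zero_mul]
  simp only [hexp, sum_add_distrib, sum_sub_distrib, ← mul_sum, hrow, hg']
  simp only [sum_const, card_univ, nsmul_eq_mul, ← sum_mul, hf, zero_mul, mul_zero, add_zero,
    sub_zero]
  ring

lemma sum_sum_mul_sub_sq_le_of_biregular (ha : ∀ i j, 0 ≤ a i j) (hrow : ∀ i, ∑ j, a i j = m)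
    (hcol : ∀ j, ∑ i, a i j = m) (f : ι → ℝ) (g : κ → ℝ) :
    ∑ i, ∑ j, a i j * (f i - g j) ^ 2 ≤ 2 * m * (∑ i, f i ^ 2 + ∑ j, g j ^ 2) := by
  calc ∑ i, ∑ j, a i j * (f i - g j) ^ 2
      ≤ ∑ i, ∑ j, (2 * f i ^ 2 * a i j + 2 * g j ^ 2 * a i j) := by
        gcongr with i _ j _
        nlinarith [ha i j, mul_nonneg (ha i j) (sq_nonneg (f i + g j))]
    _ = 2 * m * (∑ i, f i ^ 2 + ∑ j, g j ^ 2) := by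
        simp only [sum_add_distrib, ← mul_sum, hrow]
        rw [sum_comm (f := fun i j => 2 * g j ^ 2 * a i j)]
        simp only [← mul_sum, hcol, ← sum_mul]
        ring

end Biregular

lemma sum_sum_sub_sq {ι : Type*} [Fintype ι] (f : ι → ℝ) :
    ∑ i, ∑ j, (f i - f j) ^ 2 = 2 * Fintype.card ι * ∑ i, f i ^ 2 - 2 * (∑ i, f i) ^ 2 := by
  simp only [sub_sq, sum_add_distrib, sum_sub_distrib, sum_const, card_univ, nsmul_eq_mul,
    ← mul_sum, ← sum_mul, mul_assoc]
  ring

section Spinning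

variable {V : Type*} {k : ℕ} (w : V → V → ℕ)

lemma spinAdj_comm (x y : V × ZMod k) : spinAdj k w x y ↔ spinAdj k w y x := by
  unfold spinAdj
  rw [eq_comm (a := x.1), ne_comm (a := x.2)]
  tauto

variable {w}

lemma spinAdj_self_iff (hdiag : ∀ v, w v v = 0) (u : V) (i j : ZMod k) :
    spinAdj k w (u, i) (u, j) ↔ i ≠ j := by
  simp [spinAdj, hdiag]

lemma spinAdj_iff_of_ne {u v : V} (huv : u ≠ v) (i j : ZMod k) :
    spinAdj k w (u, i) (v, j) ↔ (j - i).val < w u v ∨ (i - j).val < w v u := by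
  simp [spinAdj, huv]

variable (k w) (θ : V → ℝ)

noncomputable def kuramotoWeight : V → V → ℝ :=
  fun u v => ((w u v + w v u : ℕ) : ℝ) * cos (θ u - θ v)

lemma kuramotoWeight_comm (u v : V) : kuramotoWeight w θ u v = kuramotoWeight w θ v u := by
  rw [kuramotoWeight, kuramotoWeight, add_comm (w u v), ← cos_neg, neg_sub]

variable [DecidableEq V]

noncomputable def spinWeight : V × ZMod k → V × ZMod k → ℝ :=
  fun x y => if spinAdj k w x y then cos (θ x.1 - θ y.1) else 0

lemma spinWeight_comm (x y : V × ZMod k) : spinWeight k w θ x y = spinWeight k w θ y x := by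
  simp only [spinWeight, spinAdj_comm w x y, ← cos_neg (θ x.1 - _), neg_sub]

variable {k w} [NeZero k]

lemma card_spinAdj_right (horient : ∀ u v, w u v = 0 ∨ w v u = 0) (hmax : ∀ u v, w u v ≤ k)
    {u v : V} (huv : u ≠ v) (i : ZMod k) :
    #{j | spinAdj k w (u, i) (v, j)} = w u v + w v u := by
  simp only [spinAdj_iff_of_ne huv]
  exact ZMod.card_filter_sub_val_lt_or (hmax u v) (hmax v u) (horient u v) i

lemma card_spinAdj_left (horient : ∀ u v, w u v = 0 ∨ w v u = 0) (hmax : ∀ u v, w u v ≤ k)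
    {u v : V} (huv : u ≠ v) (j : ZMod k) :
    #{i | spinAdj k w (u, i) (v, j)} = w u v + w v u := by
  simp only [spinAdj_comm w (u, _)]
  rw [card_spinAdj_right horient hmax huv.symm, add_comm]

variable (k w) in
noncomputable def fiberEnergy (y : V × ZMod k → ℝ) (u v : V) : ℝ :=
  ∑ i, ∑ j, (if spinAdj k w (u, i) (v, j) then (1 : ℝ) else 0) * (y (u, i) - y (v, j)) ^ 2

lemma fiberEnergy_nonneg (y : V × ZMod k → ℝ) (u v : V) : 0 ≤ fiberEnergy k w y u v := by
  unfold fiberEnergy; positivity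

lemma sum_indicator_spinAdj_right (horient : ∀ u v, w u v = 0 ∨ w v u = 0)
    (hmax : ∀ u v, w u v ≤ k) {u v : V} (huv : u ≠ v) (i : ZMod k) :
    ∑ j, (if spinAdj k w (u, i) (v, j) then (1 : ℝ) else 0) = ((w u v + w v u : ℕ) : ℝ) := by
  rw [sum_boole, card_spinAdj_right horient hmax huv]

lemma sum_indicator_spinAdj_left (horient : ∀ u v, w u v = 0 ∨ w v u = 0)
    (hmax : ∀ u v, w u v ≤ k) {u v : V} (huv : u ≠ v) (j : ZMod k) :
    ∑ i, (if spinAdj k w (u, i) (v, j) then (1 : ℝ) else 0) = ((w u v + w v u : ℕ) : ℝ) := by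
  rw [sum_boole, card_spinAdj_left horient hmax huv]

lemma fiberEnergy_lift_add (hdiag : ∀ v, w v v = 0) (horient : ∀ u v, w u v = 0 ∨ w v u = 0)
    (hmax : ∀ u v, w u v ≤ k) (z : V → ℝ) {r : V × ZMod k → ℝ} (hr : ∀ u, ∑ i, r (u, i) = 0)
    (u v : V) :
    fiberEnergy k w (fun x => z x.1 + r x) u v
      = k * ((w u v + w v u : ℕ) : ℝ) * (z u - z v) ^ 2 + fiberEnergy k w r u v := by
  by_cases huv : u = v
  · subst huv
    simp [fiberEnergy, hdiag]
  · have hsplit (i j : ZMod k) : z u + r (u, i) - (z v + r (v, j))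
        = z u - z v + (r (u, i) - r (v, j)) := by ring
    simp only [fiberEnergy, hsplit]
    rw [sum_sum_mul_add_sq_of_biregular (sum_indicator_spinAdj_right horient hmax huv)
      (sum_indicator_spinAdj_left horient hmax huv) (hr u) (hr v), ZMod.card]
    ring

lemma fiberEnergy_self (hdiag : ∀ v, w v v = 0) {r : V × ZMod k → ℝ} {u : V}
    (hr : ∑ i, r (u, i) = 0) : fiberEnergy k w r u u = 2 * k * ∑ i, r (u, i) ^ 2 := by
  have hterm (i j : ZMod k) : (if spinAdj k w (u, i) (u, j) then (1 : ℝ) else 0)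
      * (r (u, i) - r (u, j)) ^ 2 = (r (u, i) - r (u, j)) ^ 2 := by
    by_cases h : i = j
    · simp [h]
    · simp [(spinAdj_self_iff hdiag u i j).2 h]
  simp only [fiberEnergy, hterm]
  rw [sum_sum_sub_sq (fun i => r (u, i)), hr, ZMod.card]
  ring

lemma fiberEnergy_le (horient : ∀ u v, w u v = 0 ∨ w v u = 0) (hmax : ∀ u v, w u v ≤ k)
    (r : V × ZMod k → ℝ) {u v : V} (huv : u ≠ v) :
    fiberEnergy k w r u v
      ≤ 2 * ((w u v + w v u : ℕ) : ℝ) * (∑ i, r (u, i) ^ 2 + ∑ j, r (v, j) ^ 2) :=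
  sum_sum_mul_sub_sq_le_of_biregular (fun _ _ => by positivity)
    (sum_indicator_spinAdj_right horient hmax huv) (sum_indicator_spinAdj_left horient hmax huv)
    (fun i => r (u, i)) (fun j => r (v, j))

variable [Fintype V]

lemma hessS_eq_weightedLap (hdiag : ∀ v, w v v = 0) :
    hessS k w θ = weightedLap (spinWeight k w θ) := by
  ext x y
  by_cases h : x = y
  · subst h
    simp [hessS, weightedLap, spinWeight, spinAdj, hdiag, ← cos_neg (θ x.1 - _)]
  · simp only [hessS, weightedLap, spinWeight, h, if_false, Matrix.sub_apply,
      diagonal_apply_ne _ h, of_apply, zero_sub]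
    split_ifs <;> simp

lemma hessW_eq_weightedLap (hdiag : ∀ v, w v v = 0) :
    hessW w θ = weightedLap (kuramotoWeight w θ) := by
  ext u v
  by_cases h : u = v
  · subst h
    have h0 : kuramotoWeight w θ u u = 0 := by simp [kuramotoWeight, hdiag]
    rw [hessW, if_pos rfl]
    simp only [weightedLap, Matrix.sub_apply, diagonal_apply_eq, of_apply, h0, sub_zero]
    exact sum_congr rfl fun x _ => kuramotoWeight_comm w θ x u
  · simp [hessW, weightedLap, kuramotoWeight, h]

lemma dirichletEnergy_spinWeight (y : V × ZMod k → ℝ) :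
    dirichletEnergy (spinWeight k w θ) y = ∑ u, ∑ v, cos (θ u - θ v) * fiberEnergy k w y u v := by
  simp only [dirichletEnergy, fiberEnergy, Fintype.sum_prod_type, mul_sum]
  refine sum_congr rfl fun u _ => ?_
  rw [sum_comm]
  refine sum_congr rfl fun i _ => sum_congr rfl fun v _ => sum_congr rfl fun j _ => ?_
  simp only [spinWeight]
  split_ifs <;> simp

lemma dirichletEnergy_spinWeight_lift_add (hdiag : ∀ v, w v v = 0)
    (horient : ∀ u v, w u v = 0 ∨ w v u = 0) (hmax : ∀ u v, w u v ≤ k) (z : V → ℝ)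
    {r : V × ZMod k → ℝ} (hr : ∀ u, ∑ i, r (u, i) = 0) :
    dirichletEnergy (spinWeight k w θ) (fun x => z x.1 + r x)
      = k * dirichletEnergy (kuramotoWeight w θ) z
        + ∑ u, ∑ v, cos (θ u - θ v) * fiberEnergy k w r u v := by
  rw [dirichletEnergy_spinWeight]
  simp only [fiberEnergy_lift_add hdiag horient hmax z hr, dirichletEnergy, kuramotoWeight,
    mul_sum, ← sum_add_distrib]
  exact sum_congr rfl fun u _ => sum_congr rfl fun v _ => by ring

lemma le_sum_cos_mul_fiberEnergy (hdiag : ∀ v, w v v = 0)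
    (horient : ∀ u v, w u v = 0 ∨ w v u = 0) (hmax : ∀ u v, w u v ≤ k)
    {r : V × ZMod k → ℝ} (hr : ∀ u, ∑ i, r (u, i) = 0) :
    2 * (k - 2 * ((∑ u, ∑ v, w u v : ℕ) : ℝ)) * ∑ x, r x ^ 2
      ≤ ∑ u, ∑ v, cos (θ u - θ v) * fiberEnergy k w r u v := by
  set R := ∑ x, r x ^ 2 with hR
  rw [Fintype.sum_prod_type] at hR
  have hterm (u v : V) : (if u = v then 2 * k * ∑ i, r (u, i) ^ 2 else 0)
      - 2 * ((w u v + w v u : ℕ) : ℝ) * R ≤ cos (θ u - θ v) * fiberEnergy k w r u v := by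
    by_cases huv : u = v
    · subst huv
      simp [fiberEnergy_self hdiag (hr u), hdiag]
    · have hpair : ∑ i, r (u, i) ^ 2 + ∑ j, r (v, j) ^ 2 ≤ R := by
        rw [hR, ← sum_pair (f := fun a => ∑ i, r (a, i) ^ 2) huv]
        exact sum_le_sum_of_subset_of_nonneg (subset_univ _) fun _ _ _ => by positivity
      have hE := fiberEnergy_nonneg (k := k) (w := w) r u v
      have hcos : -fiberEnergy k w r u v ≤ cos (θ u - θ v) * fiberEnergy k w r u v := by
        nlinarith [neg_one_le_cos (θ u - θ v)]
      rw [if_neg huv, zero_sub]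
      nlinarith [fiberEnergy_le horient hmax r huv,
        mul_le_mul_of_nonneg_left hpair (by positivity : (0 : ℝ) ≤ 2 * ((w u v + w v u : ℕ) : ℝ))]
  calc 2 * (k - 2 * ((∑ u, ∑ v, w u v : ℕ) : ℝ)) * R
      = ∑ u, ∑ v, ((if u = v then 2 * k * ∑ i, r (u, i) ^ 2 else 0)
          - 2 * ((w u v + w v u : ℕ) : ℝ) * R) := by
        simp only [sum_sub_distrib, sum_ite_eq, mem_univ, if_true, ← mul_sum, ← sum_mul]
        push_cast
        simp only [sum_add_distrib]
        rw [sum_comm (f := fun u v => (w v u : ℝ)), hR]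
        ring
    _ ≤ _ := sum_le_sum fun u _ => sum_le_sum fun v _ => hterm u v

end Spinning

lemma exists_eq_lift_add {V : Type*} {k : ℕ} [NeZero k] (y : V × ZMod k → ℝ) :
    ∃ (z : V → ℝ) (r : V × ZMod k → ℝ), (∀ u, ∑ i, r (u, i) = 0) ∧ y = fun x => z x.1 + r x := by
  refine ⟨fun u => (∑ i, y (u, i)) / k, fun x => y x - (∑ i, y (x.1, i)) / k, fun u => ?_,
    by simp⟩
  have hk : (k : ℝ) ≠ 0 := Nat.cast_ne_zero.2 (NeZero.ne k)
  simp [sum_sub_distrib, ZMod.card, mul_div_cancel₀ _ hk]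

lemma le_of_two_mul_sum_sum_lt {V : Type*} [Fintype V] {w : V → V → ℕ} {k : ℕ}
    (hk : 2 * (∑ u, ∑ v, w u v) < k) (u v : V) : w u v ≤ k := by
  have hrow : w u v ≤ ∑ v, w u v := single_le_sum (fun _ _ => Nat.zero_le _) (mem_univ v)
  have hall : ∑ v, w u v ≤ ∑ u, ∑ v, w u v :=
    single_le_sum (f := fun u => ∑ v, w u v) (fun _ _ => Nat.zero_le _) (mem_univ u)
  omega

section Stability

variable {V : Type*} [Fintype V] [DecidableEq V] {k : ℕ} [NeZero k] {w : V → V → ℕ}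
  (θ : V → ℝ)

lemma dirichletEnergy_spinWeight_lift (hdiag : ∀ v, w v v = 0)
    (horient : ∀ u v, w u v = 0 ∨ w v u = 0) (hmax : ∀ u v, w u v ≤ k) (z : V → ℝ) :
    dirichletEnergy (spinWeight k w θ) (fun x => z x.1)
      = k * dirichletEnergy (kuramotoWeight w θ) z := by
  simpa [fiberEnergy] using
    dirichletEnergy_spinWeight_lift_add θ hdiag horient hmax z (r := 0) fun _ => by simp

lemma dirichletEnergy_kuramotoWeight_pos_of_spinWeight (hdiag : ∀ v, w v v = 0)
    (horient : ∀ u v, w u v = 0 ∨ w v u = 0) (hmax : ∀ u v, w u v ≤ k)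
    (hS : ∀ y : V × ZMod k → ℝ, (¬∃ t : ℝ, y = fun _ => t) →
      0 < dirichletEnergy (spinWeight k w θ) y)
    (z : V → ℝ) (hz : ¬∃ t : ℝ, z = fun _ => t) : 0 < dirichletEnergy (kuramotoWeight w θ) z := by
  have hlift : ¬∃ t : ℝ, (fun x : V × ZMod k => z x.1) = fun _ => t := by
    rintro ⟨t, ht⟩
    exact hz ⟨t, funext fun u => congr_fun ht (u, 0)⟩
  have hpos := hS _ hlift
  rw [dirichletEnergy_spinWeight_lift θ hdiag horient hmax] at hpos
  exact pos_of_mul_pos_right hpos k.cast_nonneg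

lemma dirichletEnergy_spinWeight_pos_of_kuramotoWeight (hdiag : ∀ v, w v v = 0)
    (horient : ∀ u v, w u v = 0 ∨ w v u = 0) (hk : 2 * (∑ u, ∑ v, w u v) < k)
    (hW : ∀ z : V → ℝ, (¬∃ t : ℝ, z = fun _ => t) → 0 < dirichletEnergy (kuramotoWeight w θ) z)
    (y : V × ZMod k → ℝ) (hy : ¬∃ t : ℝ, y = fun _ => t) :
    0 < dirichletEnergy (spinWeight k w θ) y := by
  have hmax := le_of_two_mul_sum_sum_lt hk
  obtain ⟨z, r, hr, rfl⟩ := exists_eq_lift_add y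
  have hEz : 0 ≤ dirichletEnergy (kuramotoWeight w θ) z := by
    by_cases hz : ∃ t : ℝ, z = fun _ => t
    · obtain ⟨t, rfl⟩ := hz
      rw [dirichletEnergy_const]
    · exact (hW z hz).le
  have hgap : (0 : ℝ) < k - 2 * ((∑ u, ∑ v, w u v : ℕ) : ℝ) := sub_pos.2 (by exact_mod_cast hk)
  have hR := sum_nonneg fun x (_ : x ∈ univ) => sq_nonneg (r x)
  have hbound := le_sum_cos_mul_fiberEnergy θ hdiag horient hmax hr
  rw [dirichletEnergy_spinWeight_lift_add θ hdiag horient hmax z hr]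
  by_contra hle
  have hR0 : ∑ x, r x ^ 2 = 0 := by nlinarith
  have hEz0 : dirichletEnergy (kuramotoWeight w θ) z = 0 := by nlinarith
  obtain ⟨t, rfl⟩ : ∃ t : ℝ, z = fun _ => t := by
    by_contra hz
    exact (hW z hz).ne' hEz0
  have hr0 (x : V × ZMod k) : r x = 0 := by
    simpa using (sum_eq_zero_iff_of_nonneg fun x _ => sq_nonneg (r x)).1 hR0 x (mem_univ x)
  exact hy ⟨t, by simp [hr0]⟩

end Stability

theorem spinning_stability_iff_general {V : Type*} [Fintype V] [DecidableEq V]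
    (w : V → V → ℕ) (hdiag : ∀ v, w v v = 0)
    (horient : ∀ u v, w u v = 0 ∨ w v u = 0)
    (k : ℕ) [NeZero k]
    (hk : 2 * (∑ u, ∑ v, w u v) < k)
    (θ : V → ℝ) :
    ((hessS k w θ).PosSemidef ∧
      ∀ y : V × ZMod k → ℝ, (hessS k w θ).mulVec y = 0 ↔ ∃ t : ℝ, y = fun _ => t) ↔
    ((hessW w θ).PosSemidef ∧
      ∀ z : V → ℝ, (hessW w θ).mulVec z = 0 ↔ ∃ t : ℝ, z = fun _ => t) := by
  have hmax := le_of_two_mul_sum_sum_lt hk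
  rw [hessS_eq_weightedLap θ hdiag, hessW_eq_weightedLap θ hdiag,
    weightedLap_stable_iff (spinWeight_comm k w θ), weightedLap_stable_iff (kuramotoWeight_comm w θ)]
  exact ⟨dirichletEnergy_kuramotoWeight_pos_of_spinWeight θ hdiag horient hmax,
    dirichletEnergy_spinWeight_pos_of_kuramotoWeight θ hdiag horient hk⟩

/-- If `k > 2 w(G)`, the lifted equilibrium `θ^σ` of the `k`-spinning is linearly
stable (Hessian positive semidefinite with kernel spanned by the all-ones vector)
iff the equilibrium `θ` of `G` is linearly stable. -/
theorem spinning_stability_iff {V : Type*} [Fintype V] [DecidableEq V]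
    (w : V → V → ℕ) (hdiag : ∀ v, w v v = 0)
    (horient : ∀ u v, w u v = 0 ∨ w v u = 0)
    (k : ℕ) [NeZero k] (hmax : ∀ u v, w u v ≤ k)
    (hk : 2 * (∑ u, ∑ v, w u v) < k)
    (θ : V → ℝ)
    (hequil : ∀ v, ∑ u, ((w u v + w v u : ℕ) : ℝ) * Real.sin (θ u - θ v) = 0) :
    ((hessS k w θ).PosSemidef ∧
      ∀ y : V × ZMod k → ℝ, (hessS k w θ).mulVec y = 0 ↔ ∃ t : ℝ, y = fun _ => t) ↔
    ((hessW w θ).PosSemidef ∧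
      ∀ z : V → ℝ, (hessW w θ).mulVec z = 0 ↔ ∃ t : ℝ, z = fun _ => t) :=
  spinning_stability_iff_general w hdiag horient k hk θ
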